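/- arXiv:1810.06376 — 2 statements merged into one kernel-verified Lean document; each statement's English description precedes it below -/
import Mathlib

section
/- For real numbers a, b, c with a ≠ 0 and b ≠ 0, define θ̃(a,b,c) = (1/2)·log[(e^{a+b+c} + e^{-a-b-c} + e^{-a-b+c} + e^{a+b-c}) / (e^{a-b+c} + e^{-a+b-c} + e^{-a+b+c} + e^{a-b-c})]. Then θ̃(a,b,c) ≠ 0. -/
/-!
Pairing each exponential with its negative turns the numerator into `4 cosh c cosh (a + b)` and
the denominator into `4 cosh c cosh (a - b)`, so `θ̃ = ½ log (cosh (a + b) / cosh (a - b))`.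
This vanishes only if `cosh (a + b) = cosh (a - b)`, but the difference of the two is
`2 sinh a sinh b`, which is nonzero when `a ≠ 0` and `b ≠ 0`.
-/

open Real

namespace Real

lemma cosh_add_add_cosh_sub (x y : ℝ) : cosh (x + y) + cosh (x - y) = 2 * cosh x * cosh y := by
  rw [cosh_add, cosh_sub]; ring

lemma cosh_add_sub_cosh_sub (x y : ℝ) : cosh (x + y) - cosh (x - y) = 2 * sinh x * sinh y := by
  rw [cosh_add, cosh_sub]; ring

lemma exp_add_exp_neg (x : ℝ) : exp x + exp (-x) = 2 * cosh x := by
  rw [cosh_eq]; ring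

lemma exp_add_add_exp_neg_sub_add_exp_neg_add_add_exp_sub (x y : ℝ) :
    exp (x + y) + exp (-x - y) + exp (-x + y) + exp (x - y) = 4 * cosh y * cosh x := by
  calc exp (x + y) + exp (-x - y) + exp (-x + y) + exp (x - y)
      = (exp (x + y) + exp (-(x + y))) + (exp (x - y) + exp (-(x - y))) := by ring_nf
    _ = 2 * (cosh (x + y) + cosh (x - y)) := by rw [exp_add_exp_neg, exp_add_exp_neg]; ring
    _ = 4 * cosh y * cosh x := by rw [cosh_add_add_cosh_sub]; ring

lemma cosh_add_ne_cosh_sub {x y : ℝ} (hx : x ≠ 0) (hy : y ≠ 0) : cosh (x + y) ≠ cosh (x - y) := by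
  rw [← sub_ne_zero, cosh_add_sub_cosh_sub]
  exact mul_ne_zero (mul_ne_zero two_ne_zero (sinh_ne_zero.mpr hx)) (sinh_ne_zero.mpr hy)

end Real

theorem thetaTilde_ne_zero (a b c : ℝ) (ha : a ≠ 0) (hb : b ≠ 0) :
    (1 / 2) * log ((exp (a + b + c) + exp (-a - b - c) + exp (-a - b + c) + exp (a + b - c)) /
        (exp (a - b + c) + exp (-a + b - c) + exp (-a + b + c) + exp (a - b - c))) ≠ 0 := by
  have hnum := exp_add_add_exp_neg_sub_add_exp_neg_add_add_exp_sub (a + b) c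
  have hden := exp_add_add_exp_neg_sub_add_exp_neg_add_add_exp_sub (a - b) c
  rw [show -(a + b) = -a - b by ring] at hnum
  rw [show -(a - b) = -a + b by ring] at hden
  rw [hnum, hden, mul_div_mul_left _ _ (by positivity)]
  refine mul_ne_zero (by norm_num) (log_ne_zero_of_pos_of_ne_one (by positivity) ?_)
  rw [Ne, div_eq_one_iff_eq (cosh_pos _).ne']
  exact cosh_add_ne_cosh_sub ha hb
end

section
/- For real numbers a, b, c with a ≠ 0 and b ≠ 0, define θ̃(a,b,c) = (1/2)·log[(e^{a+b+c} + e^{-a-b-c} + e^{-a-b+c} + e^{a+b-c}) / (e^{a-b+c} + e^{-a+b-c} + e^{-a+b+c} + e^{a-b-c})]. Then θ̃(a,b,c) > 0 if and only if a·b > 0. -/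
/-! Both sums factor as `4 cosh x cosh c`, with `x = a + b` in the numerator and `x = a - b` in
the denominator, so `θ̃ > 0` exactly when `cosh (a - b) < cosh (a + b)`, i.e. `|a - b| < |a + b|`,
and `(a + b)² - (a - b)² = 4ab`. -/

open Real

lemma exp_add_add_exp_sub_eq_four_mul_cosh_mul_cosh (x y : ℝ) :
    exp (x + y) + exp (-x - y) + exp (-x + y) + exp (x - y) = 4 * cosh x * cosh y := by
  simp only [cosh_eq, sub_eq_add_neg, exp_add]
  ring

lemma abs_sub_lt_abs_add_iff_mul_pos (a b : ℝ) : |a - b| < |a + b| ↔ 0 < a * b := by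
  rw [← sq_lt_sq]
  constructor <;> intro h <;> nlinarith

lemma half_log_div_cosh_pos_iff (x y c : ℝ) :
    0 < (1 / 2) * log (4 * cosh x * cosh c / (4 * cosh y * cosh c)) ↔ |y| < |x| := by
  have hy : 0 < 4 * cosh y * cosh c := by positivity
  rw [mul_pos_iff_of_pos_left one_half_pos, log_pos_iff (by positivity), one_lt_div hy,
    mul_lt_mul_iff_left₀ (cosh_pos c), mul_lt_mul_iff_right₀ four_pos, cosh_lt_cosh]

theorem thetaTilde_pos_iff_general (a b c : ℝ) :
    0 < (1 / 2) * log ((exp (a + b + c) + exp (-a - b - c) + exp (-a - b + c) + exp (a + b - c)) /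
        (exp (a - b + c) + exp (-a + b - c) + exp (-a + b + c) + exp (a - b - c)))
      ↔ 0 < a * b := by
  have hnum : exp (a + b + c) + exp (-a - b - c) + exp (-a - b + c) + exp (a + b - c)
      = 4 * cosh (a + b) * cosh c := by
    rw [← exp_add_add_exp_sub_eq_four_mul_cosh_mul_cosh]
    ring_nf
  have hden : exp (a - b + c) + exp (-a + b - c) + exp (-a + b + c) + exp (a - b - c)
      = 4 * cosh (a - b) * cosh c := by
    rw [← exp_add_add_exp_sub_eq_four_mul_cosh_mul_cosh]
    ring_nf
  rw [hnum, hden, half_log_div_cosh_pos_iff, abs_sub_lt_abs_add_iff_mul_pos]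

theorem thetaTilde_pos_iff (a b c : ℝ) (ha : a ≠ 0) (hb : b ≠ 0) :
    0 < (1 / 2) * log ((exp (a + b + c) + exp (-a - b - c) + exp (-a - b + c) + exp (a + b - c)) /
        (exp (a - b + c) + exp (-a + b - c) + exp (-a + b + c) + exp (a - b - c)))
      ↔ 0 < a * b :=
  thetaTilde_pos_iff_general a b c
end
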